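/- Let S denote the class of functions H : {0,1} × {0,1} → ℝ that are symmetric and of the form H(x₁,x₂) = φ(x₁) + φ(x₂) for some φ : {0,1} → ℝ, and let D denote the class of functions of the form H(x₁,x₂) = g(f(x₁) + f(x₂)) for some f, g : ℝ → ℝ. Then S ⊆ D (take g = id), and D ⊋ S since the XOR indicator lies in D but not in S. -/

import Mathlib

/-- Coerce a Boolean to a real number. -/
def b2r (b : Bool) : ℝ := if b then 1 else 0

/-- Singleton-partition GMAN class: symmetric additive functions with a shared score. -/
def SClass : Set (Bool → Bool → ℝ) :=
  {H | (∀ x y, H x y = H y x) ∧ ∃ φ : Bool → ℝ, ∀ x y, H x y = φ x + φ y}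

/-- Paired-partition GMAN class: DeepSet form g(f(x₁) + f(x₂)). -/
def DClass : Set (Bool → Bool → ℝ) :=
  {H | ∃ f g : ℝ → ℝ, ∀ x y, H x y = g (f (b2r x) + f (b2r y))}

/-- The XOR indicator function. -/
def xorInd : Bool → Bool → ℝ := fun x₁ x₂ => if xor x₁ x₂ then 1 else 0

/-!
On `Bool` the sum `b2r x + b2r y ∈ {0, 1, 2}` determines the unordered pair `{x, y}`, so every
symmetric function is of the form `g (b2r x + b2r y)`; in particular `DClass` contains every member
of `SClass` and the symmetric function `xorInd`. The latter is not additive: `2 φ(0) = 0` and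
`2 φ(1) = 0` force `φ(0) + φ(1) = 0 ≠ 1`.
-/

lemma mem_DClass_of_symm {H : Bool → Bool → ℝ} (hH : ∀ x y, H x y = H y x) : H ∈ DClass := by
  refine ⟨id, fun r => if r = 0 then H false false else if r = 1 then H false true
    else H true true, ?_⟩
  rintro (_ | _) (_ | _) <;> norm_num [b2r, hH true false]

lemma SClass_subset_DClass : SClass ⊆ DClass :=
  fun _ hH => mem_DClass_of_symm hH.1

lemma xorInd_symm (x y : Bool) : xorInd x y = xorInd y x := by
  simp only [xorInd, Bool.xor_comm]

lemma xorInd_not_additive (φ : Bool → ℝ) : ¬ ∀ x y, xorInd x y = φ x + φ y := by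
  intro hφ
  have h₀ := hφ false false
  have h₁ := hφ true true
  have h₀₁ := hφ false true
  norm_num [xorInd] at h₀ h₁ h₀₁
  linarith

lemma xorInd_mem_DClass_diff_SClass : xorInd ∈ DClass \ SClass :=
  ⟨mem_DClass_of_symm xorInd_symm, fun ⟨_, φ, hφ⟩ => xorInd_not_additive φ hφ⟩

/-- S ⊆ D (take g = id), and the containment is strict: the XOR indicator lies in
D but not in S. Grouped subset mixing is strictly more expressive than singleton
partitioning. -/
theorem stmt_8 :
    SClass ⊆ DClass ∧ SClass ⊂ DClass ∧ xorInd ∈ DClass \ SClass :=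
  ⟨SClass_subset_DClass,
    (Set.ssubset_iff_of_subset SClass_subset_DClass).2 ⟨xorInd, xorInd_mem_DClass_diff_SClass⟩,
    xorInd_mem_DClass_diff_SClass⟩
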